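/- arXiv:1712.08780 — 2 statements merged into one kernel-verified Lean document; each statement's English description precedes it below -/
import Mathlib

section
/- For any graph G and integers k1, k2 ≥ 1, γ_gr^t(G × K_{k1,k2}) = 2·γ_gr^t(G), where × denotes the direct product. -/
open SimpleGraph

/-- A legal open neighborhood sequence in `G`. -/
def IsOpenLegal {α : Type*} (G : SimpleGraph α) (L : List α) : Prop :=
  L.Nodup ∧ ∀ i : Fin L.length, ∃ w, G.Adj (L.get i) w ∧
    ∀ j : Fin L.length, j < i → ¬ G.Adj (L.get j) w

/-- The Grundy total domination number of `G`. -/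
noncomputable def grundyT {α : Type*} (G : SimpleGraph α) : ℕ :=
  sSup {n | ∃ L : List α, IsOpenLegal G L ∧ L.length = n}

/-- A legal closed neighborhood (dominating) sequence in `G`. -/
def IsClosedLegal {α : Type*} (G : SimpleGraph α) (L : List α) : Prop :=
  L.Nodup ∧ ∀ i : Fin L.length, ∃ w, (G.Adj (L.get i) w ∨ L.get i = w) ∧
    ∀ j : Fin L.length, j < i → ¬ (G.Adj (L.get j) w ∨ L.get j = w)

/-- The Grundy domination number of `G`. -/
noncomputable def grundyDom {α : Type*} (G : SimpleGraph α) : ℕ :=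
  sSup {n | ∃ L : List α, IsClosedLegal G L ∧ L.length = n}

/-- The direct (tensor) product of simple graphs. -/
def directProd {α β : Type*} (G : SimpleGraph α) (H : SimpleGraph β) : SimpleGraph (α × β) where
  Adj x y := G.Adj x.1 y.1 ∧ H.Adj x.2 y.2
  symm := ⟨fun _ _ h => ⟨h.1.symm, h.2.symm⟩⟩
  loopless := ⟨fun _ h => G.irrefl h.1⟩

/-- The lexicographic product of simple graphs. -/
def lexProd {α β : Type*} (G : SimpleGraph α) (H : SimpleGraph β) : SimpleGraph (α × β) where
  Adj x y := G.Adj x.1 y.1 ∨ (x.1 = y.1 ∧ H.Adj x.2 y.2)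
  symm := by
    constructor
    rintro x y (h | ⟨h1, h2⟩)
    · exact Or.inl h.symm
    · exact Or.inr ⟨h1.symm, h2.symm⟩
  loopless := by
    constructor
    rintro x (h | ⟨_, h⟩)
    · exact G.irrefl h
    · exact H.irrefl h

/-- The strong product of simple graphs. -/
def strongProd {α β : Type*} (G : SimpleGraph α) (H : SimpleGraph β) : SimpleGraph (α × β) where
  Adj x y := (G.Adj x.1 y.1 ∧ x.2 = y.2) ∨ (x.1 = y.1 ∧ H.Adj x.2 y.2) ∨
    (G.Adj x.1 y.1 ∧ H.Adj x.2 y.2)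
  symm := by
    constructor
    rintro x y (⟨h, e⟩ | ⟨e, h⟩ | ⟨h1, h2⟩)
    · exact Or.inl ⟨h.symm, e.symm⟩
    · exact Or.inr (Or.inl ⟨e.symm, h.symm⟩)
    · exact Or.inr (Or.inr ⟨h1.symm, h2.symm⟩)
  loopless := by
    constructor
    rintro x (⟨h, _⟩ | ⟨_, h⟩ | ⟨h, _⟩)
    · exact G.irrefl h
    · exact H.irrefl h
    · exact G.irrefl h

/-- The minimum number of complete bipartite subgraphs of `G` covering all edges of `G`. -/
noncomputable def bc {α : Type*} (G : SimpleGraph α) : ℕ :=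
  sInf {k | ∃ A B : Fin k → Set α,
    (∀ i a b, a ∈ A i → b ∈ B i → G.Adj a b) ∧
    (∀ u v, G.Adj u v → ∃ i, (u ∈ A i ∧ v ∈ B i) ∨ (v ∈ A i ∧ u ∈ B i))}

/-- `aD G L` is the number of entries of `L` not adjacent to any earlier entry. -/
noncomputable def aD {α : Type*} (G : SimpleGraph α) (L : List α) : ℕ :=
  {i : Fin L.length | ∀ j : Fin L.length, j < i → ¬ G.Adj (L.get j) (L.get i)}.ncard

/-- The vertex cover number of `G`. -/
noncomputable def vertexCoverNum {α : Type*} (G : SimpleGraph α) : ℕ :=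
  sInf {n | ∃ S : Finset α, S.card = n ∧ ∀ u v, G.Adj u v → u ∈ S ∨ v ∈ S}

/-- The independence number of `G`. -/
noncomputable def indepNum {α : Type*} (G : SimpleGraph α) : ℕ :=
  sSup {n | ∃ S : Finset α, S.card = n ∧ ∀ u ∈ S, ∀ v ∈ S, ¬ G.Adj u v}

/-!
If `w` footprints `v` in a legal sequence `S` of `G` and `a ~ b` in `H`, then in `G × H` the vertex
`(v, a)` is footprinted by `(w, b)` and `(v, b)` by `(w, a)`; since `(w, a)` is not adjacent to any
`(u, a)`, the sequence `S × {a}` followed by `S × {b}` is legal, giving `2 γ_gr^t(G)` from below.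
Conversely, the vertices on one side of `K_{k₁,k₂}` have the same neighbourhood, so the entries of a
legal sequence of the product lying over one side project to a legal sequence of `G`, and there are
two sides.
-/

section OpenLegal

variable {α β : Type*} {G : SimpleGraph α}

/-- Distinctness need not be required: a repeated vertex would have no footprint left. -/
theorem isOpenLegal_iff_getElem {L : List α} :
    IsOpenLegal G L ↔
      ∀ i (hi : i < L.length), ∃ w, G.Adj L[i] w ∧ ∀ j (_ : j < i), ¬ G.Adj L[j] w := by
  constructor
  · rintro ⟨-, h⟩ i hi
    obtain ⟨w, hw, hprev⟩ := h ⟨i, hi⟩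
    exact ⟨w, hw, fun j hj => hprev ⟨j, hj.trans hi⟩ hj⟩
  · intro h
    refine ⟨List.nodup_iff_pairwise_ne.2 <| List.pairwise_iff_getElem.2 fun i j _ hj hij heq => ?_,
      fun i => ?_⟩
    · obtain ⟨w, hw, hprev⟩ := h j hj
      exact hprev i hij (heq ▸ hw)
    · obtain ⟨w, hw, hprev⟩ := h i i.2
      exact ⟨w, hw, fun j hj => hprev j hj⟩

theorem IsOpenLegal.sublist {L₁ L₂ : List α} (hsub : L₁.Sublist L₂) (h : IsOpenLegal G L₂) :
    IsOpenLegal G L₁ := by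
  obtain ⟨f, hf⟩ := List.sublist_iff_exists_fin_orderEmbedding_get_eq.1 hsub
  refine ⟨h.1.sublist hsub, fun i => ?_⟩
  obtain ⟨w, hw, hprev⟩ := h.2 (f i)
  exact ⟨w, hf i ▸ hw, fun j hj => hf j ▸ hprev (f j) (f.lt_iff_lt.2 hj)⟩

theorem directProd_adj {H : SimpleGraph β} {x y : α × β} :
    (directProd G H).Adj x y ↔ G.Adj x.1 y.1 ∧ H.Adj x.2 y.2 :=
  Iff.rfl

theorem IsOpenLegal.map_fst {H : SimpleGraph β} {L : List (α × β)}
    (h : IsOpenLegal (directProd G H) L)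
    (htwin : ∀ x ∈ L, ∀ y ∈ L, ∀ t, H.Adj x.2 t → H.Adj y.2 t) :
    IsOpenLegal G (L.map Prod.fst) := by
  rw [isOpenLegal_iff_getElem] at h ⊢
  intro i hi
  rw [List.length_map] at hi
  obtain ⟨⟨w, t⟩, hw, hprev⟩ := h i hi
  refine ⟨w, by simpa using hw.1, fun j hj hGj => hprev j hj ⟨by simpa using hGj, ?_⟩⟩
  exact htwin _ (L.getElem_mem hi) _ (L.getElem_mem _) t hw.2

theorem IsOpenLegal.map_fst_filter {H : SimpleGraph β} {L : List (α × β)}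
    (h : IsOpenLegal (directProd G H) L) {p : α × β → Bool}
    (hp : ∀ x y, p x → p y → ∀ t, H.Adj x.2 t → H.Adj y.2 t) :
    IsOpenLegal G ((L.filter p).map Prod.fst) :=
  (h.sublist List.filter_sublist).map_fst fun x hx y hy =>
    hp x y (List.of_mem_filter hx) (List.of_mem_filter hy)

theorem IsOpenLegal.append_map_directProd {H : SimpleGraph β} {L : List α}
    (h : IsOpenLegal G L) {a b : β} (hab : H.Adj a b) :
    IsOpenLegal (directProd G H) (L.map (·, a) ++ L.map (·, b)) := by
  rw [isOpenLegal_iff_getElem] at h ⊢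
  intro i hi
  simp only [List.length_append, List.length_map] at hi
  rcases lt_or_ge i L.length with hi₁ | hi₂
  · obtain ⟨w, hw, hprev⟩ := h i hi₁
    refine ⟨(w, b), ?_, fun j hj => ?_⟩
    · simpa [List.getElem_append, hi₁, directProd_adj] using ⟨hw, hab⟩
    · simpa [List.getElem_append, hj.trans hi₁, directProd_adj] using fun hadj _ => hprev j hj hadj
  · obtain ⟨w, hw, hprev⟩ := h (i - L.length) (by omega)
    refine ⟨(w, a), ?_, fun j hj => ?_⟩
    · simpa [List.getElem_append, hi₂.not_gt, directProd_adj] using ⟨hw, hab.symm⟩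
    · rcases lt_or_ge j L.length with hj₁ | hj₂
      · simp [hj₁, directProd_adj]
      · simpa [List.getElem_append, hj₂.not_gt, directProd_adj] using
          fun hadj _ => hprev (j - L.length) (by omega) hadj

end OpenLegal

theorem completeBipartiteGraph_adj_of_isLeft_eq {V W : Type*} {x y t : V ⊕ W}
    (h : x.isLeft = y.isLeft) (hx : (completeBipartiteGraph V W).Adj x t) :
    (completeBipartiteGraph V W).Adj y t := by
  cases x <;> cases y <;> cases t <;> simp_all

theorem Nat.sSup_eq_two_mul_sSup {S T : Set ℕ} (hST : ∀ m ∈ S, 2 * m ∈ T)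
    (hTS : ∀ n ∈ T, ∃ a ∈ S, ∃ b ∈ S, n ≤ a + b) : sSup T = 2 * sSup S := by
  by_cases hS : BddAbove S
  · rcases S.eq_empty_or_nonempty with rfl | hne
    · have hT : T = ∅ := Set.eq_empty_of_forall_notMem fun n hn => by simpa using hTS n hn
      simp [hT]
    refine IsGreatest.csSup_eq ⟨hST _ (Nat.sSup_mem hne hS), fun n hn => ?_⟩
    obtain ⟨a, ha, b, hb, hn⟩ := hTS n hn
    have := le_csSup hS ha
    have := le_csSup hS hb
    omega
  · have hT : ¬ BddAbove T := fun ⟨B, hB⟩ => hS ⟨B, fun m hm => by have := hB (hST m hm); omega⟩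
    rw [Nat.sSup_of_not_bddAbove hS, Nat.sSup_of_not_bddAbove hT]

theorem grundyT_directProd_completeBipartite_general {α : Type*}
    (G : SimpleGraph α) (k₁ k₂ : ℕ) (hk₁ : 1 ≤ k₁) (hk₂ : 1 ≤ k₂) :
    grundyT (directProd G (completeBipartiteGraph (Fin k₁) (Fin k₂))) = 2 * grundyT G := by
  refine Nat.sSup_eq_two_mul_sSup ?_ ?_
  · rintro _ ⟨L, hL, rfl⟩
    refine ⟨_, hL.append_map_directProd (a := .inl ⟨0, hk₁⟩) (b := .inr ⟨0, hk₂⟩) (by simp), ?_⟩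
    simp [two_mul]
  · rintro _ ⟨L, hL, rfl⟩
    refine ⟨_, ⟨_, hL.map_fst_filter (p := fun x : α × (Fin k₁ ⊕ Fin k₂) => x.2.isLeft) ?_, rfl⟩,
      _, ⟨_, hL.map_fst_filter (p := fun x : α × (Fin k₁ ⊕ Fin k₂) => !x.2.isLeft) ?_, rfl⟩, ?_⟩
    · exact fun x y hx hy _ => completeBipartiteGraph_adj_of_isLeft_eq (hx.trans hy.symm)
    · exact fun x y hx hy _ => completeBipartiteGraph_adj_of_isLeft_eq
        (by simp only [Bool.not_eq_true'] at hx hy; rw [hx, hy])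
    · simp only [List.length_map, ← List.length_eq_length_filter_add, le_refl]

theorem grundyT_directProd_completeBipartite {α : Type*} [Fintype α]
    (G : SimpleGraph α) (k₁ k₂ : ℕ) (hk₁ : 1 ≤ k₁) (hk₂ : 1 ≤ k₂) :
    grundyT (directProd G (completeBipartiteGraph (Fin k₁) (Fin k₂))) = 2 * grundyT G :=
  grundyT_directProd_completeBipartite_general G k₁ k₂ hk₁ hk₂
end

section
/- If G is a graph satisfying γ_gr^t(G) = 2·bc(G), then for every graph H, γ_gr^t(G × H) = γ_gr^t(G) · γ_gr^t(H), where × denotes the direct product. -/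
open SimpleGraph

/-!
Call a neighbour of an entry of a legal open sequence that no earlier entry sees a witness of it.

Lower bound: if `(u_i)` and `(v_j)` are legal in `G` and `H` with witnesses `u_i'` and `v_j'`, then
the pairs `(u_i, v_j)`, ordered lexicographically with `j` first, are legal in `G × H` with
witnesses `(u_i', v_j')`.

Upper bound: fix a cover of `E(G)` by `bc G` bicliques. Label each entry `(x, y)` of a legal
sequence of `G × H`, with witness `(x', y')`, by a biclique containing the edge `xx'` together with
the side of it on which `x` lies. For two entries with the same label, the first one's
`G`-coordinate is adjacent to the second one's witness `G`-coordinate, so legality forces their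
`H`-coordinates to be non-adjacent: each of the `2 * bc G` label classes projects to a legal
sequence of `H`. Hence `γ(G × H) ≤ 2 bc(G) γ(H)`, which equals `γ(G) γ(H)` under the hypothesis.
-/

section

variable {α β ι : Type*}

lemma nonempty_isOpenLegal_lengths (G : SimpleGraph α) :
    {n | ∃ L : List α, IsOpenLegal G L ∧ L.length = n}.Nonempty :=
  ⟨0, [], ⟨List.nodup_nil, fun i => i.elim0⟩, rfl⟩

lemma grundyT_le {G : SimpleGraph α} {m : ℕ}
    (h : ∀ L : List α, IsOpenLegal G L → L.length ≤ m) : grundyT G ≤ m := by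
  refine csSup_le (nonempty_isOpenLegal_lengths G) ?_
  rintro _ ⟨L, hL, rfl⟩
  exact h L hL

section Fintype

variable [Fintype α]

lemma bddAbove_isOpenLegal_lengths (G : SimpleGraph α) :
    BddAbove {n | ∃ L : List α, IsOpenLegal G L ∧ L.length = n} :=
  ⟨Fintype.card α, fun _ ⟨_, hL, hn⟩ => hn ▸ hL.1.length_le_card⟩

lemma IsOpenLegal.length_le_grundyT {G : SimpleGraph α} {L : List α} (h : IsOpenLegal G L) :
    L.length ≤ grundyT G :=
  le_csSup (bddAbove_isOpenLegal_lengths G) ⟨L, h, rfl⟩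

lemma exists_isOpenLegal_length_eq_grundyT (G : SimpleGraph α) :
    ∃ L : List α, IsOpenLegal G L ∧ L.length = grundyT G :=
  Nat.sSup_mem (nonempty_isOpenLegal_lengths G) (bddAbove_isOpenLegal_lengths G)

lemma card_le_grundyT [Fintype ι] [LinearOrder ι] {G : SimpleGraph α} (f w : ι → α)
    (hadj : ∀ i, G.Adj (f i) (w i)) (hnew : ∀ i j, j < i → ¬ G.Adj (f j) (w i)) :
    Fintype.card ι ≤ grundyT G := by
  let e := Fintype.orderIsoFinOfCardEq ι rfl
  have hlen : (List.ofFn (f ∘ e)).length = Fintype.card ι := List.length_ofFn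
  have hnew' : ∀ a b : Fin (Fintype.card ι), b < a → ¬ G.Adj (f (e b)) (w (e a)) :=
    fun a b hba => hnew _ _ (e.lt_iff_lt.2 hba)
  have hlegal : IsOpenLegal G (List.ofFn (f ∘ e)) := by
    refine ⟨List.nodup_ofFn.2 fun a b hab => ?_, fun i => ⟨w (e (i.cast hlen)), ?_, fun j hji => ?_⟩⟩
    · by_contra hne
      rcases lt_or_gt_of_ne hne with h | h
      · exact hnew' b a h (by rw [show f (e a) = f (e b) from hab]; exact hadj (e b))
      · exact hnew' a b h (by rw [show f (e b) = f (e a) from hab.symm]; exact hadj (e a))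
    · simp only [List.get_eq_getElem, List.getElem_ofFn, Function.comp]
      exact hadj _
    · simp only [List.get_eq_getElem, List.getElem_ofFn, Function.comp]
      exact hnew' (i.cast hlen) (j.cast hlen) hji
  exact hlen ▸ hlegal.length_le_grundyT

end Fintype

def IsBicliqueCover (G : SimpleGraph α) {k : ℕ} (A B : Fin k → Set α) : Prop :=
  (∀ i a b, a ∈ A i → b ∈ B i → G.Adj a b) ∧
    ∀ u v, G.Adj u v → ∃ i, (u ∈ A i ∧ v ∈ B i) ∨ (v ∈ A i ∧ u ∈ B i)

lemma exists_isBicliqueCover [Finite α] (G : SimpleGraph α) :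
    ∃ A B : Fin (bc G) → Set α, IsBicliqueCover G A B := by
  show bc G ∈ {k | ∃ A B : Fin k → Set α, IsBicliqueCover G A B}
  apply Nat.sInf_mem
  have : Finite G.Dart := Finite.of_injective _ Dart.toProd_injective
  obtain ⟨k, ⟨e⟩⟩ := Finite.exists_equiv_fin G.Dart
  refine ⟨k, fun i => {(e.symm i).fst}, fun i => {(e.symm i).snd}, ?_, fun u v h => ?_⟩
  · rintro i a b rfl rfl
    exact (e.symm i).adj
  · exact ⟨e ⟨(u, v), h⟩, Or.inl ⟨by simp, by simp⟩⟩

lemma exists_dart_labelling [Finite α] (G : SimpleGraph α) :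
    ∃ c : G.Dart → Fin (bc G) × Bool, ∀ d d', c d = c d' → G.Adj d.fst d'.snd := by
  classical
  obtain ⟨A, B, hAB, hcov⟩ := exists_isBicliqueCover G
  choose i hi using fun d : G.Dart => hcov _ _ d.adj
  refine ⟨fun d => (i d, decide (d.fst ∈ A (i d) ∧ d.snd ∈ B (i d))), fun d d' h => ?_⟩
  obtain ⟨hi_eq, hb⟩ := Prod.mk.inj h
  by_cases hd : d.fst ∈ A (i d) ∧ d.snd ∈ B (i d)
  · have hd' : d'.fst ∈ A (i d') ∧ d'.snd ∈ B (i d') := by simpa [hd] using hb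
    exact hAB _ _ _ hd.1 (hi_eq ▸ hd'.2)
  · have hd' : ¬ (d'.fst ∈ A (i d') ∧ d'.snd ∈ B (i d')) := by simpa [hd] using hb
    exact (hAB _ _ _ ((hi d').resolve_left hd').1 (hi_eq ▸ ((hi d).resolve_left hd).2)).symm

section Fintype

variable [Fintype α] [Fintype β]

lemma grundyT_mul_le_grundyT_directProd (G : SimpleGraph α) (H : SimpleGraph β) :
    grundyT G * grundyT H ≤ grundyT (directProd G H) := by
  obtain ⟨L, hL, hLlen⟩ := exists_isOpenLegal_length_eq_grundyT G
  obtain ⟨M, hM, hMlen⟩ := exists_isOpenLegal_length_eq_grundyT H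
  choose v hv hnewL using hL.2
  choose w hw hnewM using hM.2
  have key := card_le_grundyT (G := directProd G H) (ι := Fin M.length ×ₗ Fin L.length)
    (fun p => (L.get (ofLex p).2, M.get (ofLex p).1)) (fun p => (v (ofLex p).2, w (ofLex p).1))
    (fun p => ⟨hv _, hw _⟩) fun p q hqp hadj => ?_
  · simpa [← hLlen, ← hMlen, mul_comm] using key
  · rcases Prod.Lex.lt_iff.1 hqp with hlt | ⟨-, hlt⟩
    · exact hnewM _ _ hlt hadj.2
    · exact hnewL _ _ hlt hadj.1

lemma grundyT_directProd_le (G : SimpleGraph α) (H : SimpleGraph β) :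
    grundyT (directProd G H) ≤ 2 * bc G * grundyT H := by
  obtain ⟨c, hc⟩ := exists_dart_labelling G
  refine grundyT_le fun P hP => ?_
  choose w hw hnew using hP.2
  let label : Fin P.length → Fin (bc G) × Bool := fun i => c ⟨((P.get i).1, (w i).1), (hw i).1⟩
  have hfiber : ∀ t ∈ Finset.univ, (Finset.univ.filter fun i => label i = t).card ≤ grundyT H := by
    intro t _
    rw [← Fintype.card_subtype]
    exact card_le_grundyT (fun i : {i // label i = t} => (P.get i).2) (fun i => (w i).2)
      (fun i => (hw i).2) fun i j hji hH => hnew i j hji ⟨hc _ _ (j.2.trans i.2.symm), hH⟩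
  calc P.length = (Finset.univ : Finset (Fin P.length)).card := by simp
    _ ≤ grundyT H * (Finset.univ : Finset (Fin (bc G) × Bool)).card :=
      Finset.card_le_mul_card_image_of_maps_to (fun _ _ => Finset.mem_univ _) _ hfiber
    _ = 2 * bc G * grundyT H := by simp [mul_comm, mul_left_comm]

end Fintype

end

theorem grundyT_directProd_of_eq_two_bc {α β : Type*} [Fintype α] [Fintype β]
    (G : SimpleGraph α) (hG : grundyT G = 2 * bc G) (H : SimpleGraph β) :
    grundyT (directProd G H) = grundyT G * grundyT H := by
  refine le_antisymm ?_ (grundyT_mul_le_grundyT_directProd G H)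
  rw [hG]
  exact grundyT_directProd_le G H
end
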